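/- arXiv:1303.4943 — 8 statements merged into one kernel-verified Lean document; each statement's English description precedes it below -/
import Mathlib

section
/- Let G be a group generated by elements g_1, ..., g_r, each of which is conjugate to a fixed element m. Let ρ : G → GL(V) be an irreducible representation on an n-dimensional complex vector space V such that ρ(m) is diagonalizable with eigenvalue 1 of multiplicity n−1 (and one eigenvalue μ₀ ≠ 1). Then n ≤ r. -/
/-!
Each `ρ (g i)` is conjugate to `ρ m`, so `ρ (g i) - 1` has rank at most one and the fixed space
of `ρ (g i)` has codimension at most one. The common fixed space `W` of the generators therefore
has codimension at most `r`, and, being fixed pointwise by the whole group, it is invariant.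
By irreducibility `W = 0`, giving `n ≤ r`, or `W = V`, which forces `ρ m = 1` against
`μ₀ ≠ 1`.
-/

open Matrix Module

theorem Submodule.finrank_quotient_iInf_le_sum {K V ι : Type*} [DivisionRing K] [AddCommGroup V]
    [Module K V] [FiniteDimensional K V] [Fintype ι] (p : ι → Submodule K V) :
    finrank K (V ⧸ ⨅ i, p i) ≤ ∑ i, finrank K (V ⧸ p i) := by
  let F : V →ₗ[K] ∀ i, V ⧸ p i := LinearMap.pi fun i => (p i).mkQ
  have hF : LinearMap.ker F = ⨅ i, p i := by simp [F, LinearMap.ker_pi]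
  calc finrank K (V ⧸ ⨅ i, p i) = finrank K (LinearMap.range F) := by
        rw [← hF]; exact F.quotKerEquivRange.finrank_eq
    _ ≤ finrank K (∀ i, V ⧸ p i) := Submodule.finrank_le _
    _ = ∑ i, finrank K (V ⧸ p i) := finrank_pi_fintype K

namespace Matrix

theorem mulVec_eq_self_of_closure_eq_top {G R n : Type*} [Group G] [CommSemiring R] [Fintype n]
    [DecidableEq n] {S : Set G} (hS : Subgroup.closure S = ⊤) (ρ : G →* GL n R) {x : n → R}
    (hx : ∀ s ∈ S, (ρ s : Matrix n n R) *ᵥ x = x) (γ : G) :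
    (ρ γ : Matrix n n R) *ᵥ x = x := by
  induction hS ▸ Subgroup.mem_top γ using Subgroup.closure_induction with
  | mem s hs => exact hx s hs
  | one => simp
  | mul a b _ _ ha hb => rw [map_mul, Units.val_mul, ← mulVec_mulVec, hb, ha]
  | inv a _ ha =>
    conv_lhs => rw [← ha]
    rw [mulVec_mulVec, ← Units.val_mul, ← map_mul, inv_mul_cancel, map_one, Units.val_one,
      one_mulVec]

theorem rank_diagonal_ite_zero_sub_one_le {K : Type*} [Field K] {n : ℕ} (μ : K) :
    (diagonal (fun i : Fin n => if (i : ℕ) = 0 then μ else 1) - 1).rank ≤ 1 := by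
  classical
  rw [← diagonal_one, diagonal_sub, rank_diagonal, Fintype.card_le_one_iff]
  rintro ⟨a, ha⟩ ⟨b, hb⟩
  have hzero : ∀ i : Fin n, (if (i : ℕ) = 0 then μ else 1) - 1 ≠ 0 → (i : ℕ) = 0 := by
    intro i hi; by_contra h; simp [h] at hi
  exact Subtype.ext (Fin.ext ((hzero a ha).trans (hzero b hb).symm))

variable {n K : Type*} [Fintype n] [DecidableEq n]

theorem finrank_quotient_fixedSubmodule_mulVecLin [Field K] (A : Matrix n n K) :
    finrank K ((n → K) ⧸ A.mulVecLin.fixedSubmodule) = (A - 1).rank := by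
  have h : A.mulVecLin.fixedSubmodule = LinearMap.ker (A - 1).mulVecLin := by
    ext x; simp [sub_eq_zero]
  rw [h]
  exact (A - 1).mulVecLin.quotKerEquivRange.finrank_eq

theorem rank_units_conj_sub_one [CommRing K] (Q : GL n K) (A : Matrix n n K) :
    ((Q : Matrix n n K) * A * (↑Q⁻¹ : Matrix n n K) - 1).rank = (A - 1).rank := by
  have h : (Q : Matrix n n K) * A * (↑Q⁻¹ : Matrix n n K) - 1 =
      Q * (A - 1) * (↑Q⁻¹ : Matrix n n K) := by
    rw [Matrix.mul_sub, Matrix.sub_mul, Matrix.mul_one, Units.mul_inv]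
  rw [h, rank_mul_eq_left_of_isUnit_det _ _ ((isUnit_iff_isUnit_det _).mp Q⁻¹.isUnit),
    rank_mul_eq_right_of_isUnit_det _ _ ((isUnit_iff_isUnit_det _).mp Q.isUnit)]

theorem eq_one_of_units_conj_eq_one [Semiring K] {Q : GL n K} {A : Matrix n n K}
    (h : (Q : Matrix n n K) * A * (↑Q⁻¹ : Matrix n n K) = 1) : A = 1 :=
  calc A = ↑Q⁻¹ * ((Q : Matrix n n K) * A * (↑Q⁻¹ : Matrix n n K)) * Q := by
        simp [Matrix.mul_assoc]
    _ = 1 := by rw [h, Matrix.mul_one, Units.inv_mul]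

end Matrix

/-- If a group `G` is generated by `r` elements, each conjugate to a
fixed element `m`, and `ρ : G → GL_n(ℂ)` is an irreducible representation such
that `ρ m` is diagonalizable with eigenvalue `1` of multiplicity `n - 1` and one
eigenvalue `μ₀ ≠ 1`, then `n ≤ r`. -/
theorem stmt0 {G : Type*} [Group G] (m : G) (r n : ℕ)
    (g : Fin r → G) (w : Fin r → G)
    (hconj : ∀ i, g i = w i * m * (w i)⁻¹)
    (hgen : Subgroup.closure (Set.range g) = ⊤)
    (ρ : G →* Matrix.GeneralLinearGroup (Fin n) ℂ)
    (μ₀ : ℂ) (hμ₀ : μ₀ ≠ 1)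
    (P : Matrix.GeneralLinearGroup (Fin n) ℂ)
    (hdiag : (ρ m : Matrix (Fin n) (Fin n) ℂ) =
      (P : Matrix (Fin n) (Fin n) ℂ) *
        Matrix.diagonal (fun i : Fin n => if (i : ℕ) = 0 then μ₀ else 1) *
        (↑(P⁻¹) : Matrix (Fin n) (Fin n) ℂ))
    (hirr : ∀ U : Submodule ℂ (Fin n → ℂ),
      (∀ x ∈ U, ∀ γ : G, (ρ γ : Matrix (Fin n) (Fin n) ℂ) *ᵥ x ∈ U) →
      U = ⊥ ∨ U = ⊤) :
    n ≤ r := by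
  rcases Nat.eq_zero_or_pos n with rfl | hn
  · exact Nat.zero_le r
  set W := ⨅ i, (ρ (g i) : Matrix (Fin n) (Fin n) ℂ).mulVecLin.fixedSubmodule
  have hW_fixed : ∀ x ∈ W, ∀ γ : G, (ρ γ : Matrix (Fin n) (Fin n) ℂ) *ᵥ x = x := by
    intro x hx
    refine mulVec_eq_self_of_closure_eq_top hgen ρ ?_
    rintro _ ⟨i, rfl⟩
    simpa using (Submodule.mem_iInf _).mp hx i
  have hrank : ∀ i, ((ρ (g i) : Matrix (Fin n) (Fin n) ℂ) - 1).rank ≤ 1 := by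
    intro i
    rw [hconj, map_mul, map_mul, map_inv, Units.val_mul, Units.val_mul, rank_units_conj_sub_one,
      hdiag, rank_units_conj_sub_one]
    exact rank_diagonal_ite_zero_sub_one_le μ₀
  have hcodim : finrank ℂ ((Fin n → ℂ) ⧸ W) ≤ r := calc
    _ ≤ ∑ i, finrank ℂ (_ ⧸ _) := Submodule.finrank_quotient_iInf_le_sum _
    _ ≤ ∑ i : Fin r, 1 := Finset.sum_le_sum fun i _ =>
      (finrank_quotient_fixedSubmodule_mulVecLin _).trans_le (hrank i)
    _ = r := by simp
  rcases hirr W (fun x hx γ => (hW_fixed x hx γ).symm ▸ hx) with hbot | htop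
  · rwa [(Submodule.quotEquivOfEqBot W hbot).finrank_eq, finrank_fin_fun] at hcodim
  · have hm : (ρ m : Matrix (Fin n) (Fin n) ℂ) = 1 := ext_of_mulVec_single fun j => by
      rw [one_mulVec]; exact hW_fixed _ (htop ▸ Submodule.mem_top) m
    rw [hdiag] at hm
    have := congr_fun (congr_fun (eq_one_of_units_conj_eq_one hm) ⟨0, hn⟩) ⟨0, hn⟩
    exact absurd (by simpa using this) hμ₀
end

section
/- Let Ỹ be the n×n complex matrix whose first row is (x_1, x_2, ..., x_{n−1}, y_0), whose last column is (y_0, y_1, ..., y_{n−1})ᵀ, whose subdiagonal entries Ỹ_{i+1,i} equal 1 for 1 ≤ i ≤ n−1, and whose all other entries are 0. Write det(tI − Ỹ) = a_0 + a_1 t + ... + a_{n−1} t^{n−1} + t^n. Then for all 1 ≤ i ≤ n, a_{n−i} = −x_i − y_{n−i} + Σ_{j=1}^{i−1} x_j y_{n−i+j}, where x_n is set to 0. -/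
/-!
Let `P = X ^ n - ∑_{k < n} y_k X ^ k` and let `v_k = divX^[k + 1] P` be the Horner tails of `P`,
so that `v_{n-1} = 1` and `v_{k-1} = X v_k - y_k`. These relations say exactly that rows
`1, …, n-1` of `(X - Ỹ) v` vanish, while row `0` equals `q = P - ∑_{j=1}^{n-1} x_j divX^[j] P`.
By Cramer's rule `det (X - Ỹ)` is then `q` times the cofactor of the top right entry, and that
minor is upper triangular with `-1` on the diagonal, so `charpoly Ỹ = q`. The coefficient of
`X ^ (n - i)` in `q` is read off from `coeff (divX^[j] P) d = coeff P (d + j)`.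
-/

open Matrix Polynomial Finset

namespace Polynomial

variable {R : Type*} [Semiring R]

theorem coeff_iterate_divX (p : R[X]) (k d : ℕ) : (divX^[k] p).coeff d = p.coeff (d + k) := by
  induction k generalizing d with
  | zero => rfl
  | succ k ih => rw [Function.iterate_succ_apply', coeff_divX, ih, add_right_comm, add_assoc]

theorem X_mul_iterate_divX_succ_add_C (p : R[X]) (k : ℕ) :
    X * divX^[k + 1] p + C (p.coeff k) = divX^[k] p := by
  conv_rhs => rw [← X_mul_divX_add (divX^[k] p), coeff_iterate_divX, zero_add]
  rw [Function.iterate_succ_apply']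

end Polynomial

theorem Matrix.det_eq_of_mulVec_eq_single {R : Type*} [CommRing R] {m : ℕ}
    (A : Matrix (Fin (m + 1)) (Fin (m + 1)) R) {v : Fin (m + 1) → R} {q : R}
    (hv : v (Fin.last m) = 1) (hAv : A *ᵥ v = Pi.single 0 q) :
    A.det = (-1) ^ m * q * (A.submatrix Fin.succ Fin.castSucc).det := by
  have hcramer : A.det • v = cramer A (Pi.single 0 q) := by
    rw [cramer_eq_adjugate_mulVec, ← hAv, mulVec_mulVec, adjugate_mul, smul_mulVec, one_mulVec]
  have hlast := congrFun hcramer (Fin.last m)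
  rw [Pi.smul_apply, hv, smul_eq_mul, mul_one, cramer_apply] at hlast
  rw [hlast, det_succ_column _ (Fin.last m), Fintype.sum_eq_single 0 fun i hi => by simp [hi],
    submatrix_updateCol_succAbove]
  simp

section CompanionPoly

variable {R : Type*} [Ring R]

/-- The polynomial whose companion matrix has last column `c 0, …, c (n - 1)`. -/
noncomputable def companionPoly (n : ℕ) (c : ℕ → R) : R[X] :=
  X ^ n - ∑ k ∈ range n, C (c k) * X ^ k

theorem coeff_companionPoly (n : ℕ) (c : ℕ → R) (e : ℕ) :
    (companionPoly n c).coeff e = (if e = n then 1 else 0) - if e < n then c e else 0 := by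
  simp [companionPoly, coeff_X_pow]

theorem iterate_divX_companionPoly_self (n : ℕ) (c : ℕ → R) :
    divX^[n] (companionPoly n c) = 1 := by
  ext d
  rw [coeff_iterate_divX, coeff_companionPoly, coeff_one]
  split_ifs <;> first | omega | simp

end CompanionPoly

section BorderedShift

variable {R : Type*}

/-- The matrix `Ỹ`, with `x` indexed from `1` along the first row and `y` from `0` down the last
column; the last column takes precedence. -/
def borderedShift [Zero R] [One R] (n : ℕ) (x y : ℕ → R) : Matrix (Fin n) (Fin n) R :=
  of fun i j =>
    if (j : ℕ) = n - 1 then y i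
    else if (i : ℕ) = 0 then x ((j : ℕ) + 1)
    else if (i : ℕ) = (j : ℕ) + 1 then 1
    else 0

section Entries

variable [Zero R] [One R] {m : ℕ} (x y : ℕ → R)

theorem borderedShift_last (i : Fin (m + 1)) :
    borderedShift (m + 1) x y i (Fin.last m) = y i := by
  simp [borderedShift]

theorem borderedShift_zero_castSucc (j : Fin m) :
    borderedShift (m + 1) x y 0 j.castSucc = x (j + 1) := by
  simp [borderedShift, j.isLt.ne]

theorem borderedShift_succ_castSucc (i j : Fin m) :
    borderedShift (m + 1) x y i.succ j.castSucc = if i = j then 1 else 0 := by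
  simp only [borderedShift, of_apply, Fin.val_succ, Fin.val_castSucc, add_tsub_cancel_right,
    j.isLt.ne, Nat.succ_ne_zero, if_false, add_left_inj, Fin.ext_iff]

end Entries

variable [CommRing R] {m : ℕ} (x y : ℕ → R)

theorem charmatrix_borderedShift_succ_castSucc (i j : Fin m) :
    (borderedShift (m + 1) x y).charmatrix i.succ j.castSucc =
      (if (j : ℕ) = i + 1 then X else 0) - if i = j then 1 else 0 := by
  rw [charmatrix_apply, borderedShift_succ_castSucc, diagonal_apply]
  simp only [Fin.ext_iff, Fin.val_succ, Fin.val_castSucc, eq_comm (a := (i : ℕ) + 1)]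
  split_ifs <;> simp

theorem det_charmatrix_borderedShift_submatrix :
    ((borderedShift (m + 1) x y).charmatrix.submatrix Fin.succ Fin.castSucc).det = (-1) ^ m := by
  rw [det_of_isUpperTriangular]
  · simp [charmatrix_borderedShift_succ_castSucc]
  · intro i j hji
    have hji : (j : ℕ) < i := hji
    rw [submatrix_apply, charmatrix_borderedShift_succ_castSucc, if_neg (by omega),
      if_neg (by omega), sub_zero]

theorem charmatrix_borderedShift_mulVec_apply {v : Fin (m + 1) → R[X]}
    (hv : v (Fin.last m) = 1) (i : Fin (m + 1)) :
    ((borderedShift (m + 1) x y).charmatrix *ᵥ v) i =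
      X * v i - (∑ j : Fin m, C (borderedShift (m + 1) x y i j.castSucc) * v j.castSucc)
        - C (y i) := by
  rw [charmatrix, sub_mulVec, Pi.sub_apply, scalar_apply, mulVec_diagonal, mulVec, dotProduct,
    Fin.sum_univ_castSucc, hv]
  simp only [RingHom.mapMatrix_apply, map_apply, borderedShift_last, mul_one, sub_sub]

theorem charmatrix_borderedShift_mulVec :
    (borderedShift (m + 1) x y).charmatrix *ᵥ (fun k => divX^[k + 1] (companionPoly (m + 1) y)) =
      Pi.single 0 (companionPoly (m + 1) y -
        ∑ j ∈ Ico 1 (m + 1), C (x j) * divX^[j] (companionPoly (m + 1) y)) := by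
  set P := companionPoly (m + 1) y
  have hcoeff {k : ℕ} (hk : k < m + 1) : P.coeff k = -y k := by
    rw [coeff_companionPoly, if_neg hk.ne, if_pos hk, zero_sub]
  funext i
  rw [charmatrix_borderedShift_mulVec_apply x y
    (by simpa using iterate_divX_companionPoly_self (m + 1) y)]
  induction i using Fin.cases with
  | zero =>
    have hX := X_mul_iterate_divX_succ_add_C P 0
    rw [hcoeff m.succ_pos, map_neg, Function.iterate_zero_apply] at hX
    simp only [borderedShift_zero_castSucc, Fin.val_zero, Fin.val_castSucc, zero_add,
      Pi.single_eq_same, Fin.sum_univ_eq_sum_range (fun k => C (x (k + 1)) * divX^[k + 1] P),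
      range_eq_Ico, sum_Ico_add' (fun k => C (x k) * divX^[k] P)]
    linear_combination hX
  | succ i =>
    have hX := X_mul_iterate_divX_succ_add_C P (i + 1)
    rw [hcoeff (by omega), map_neg] at hX
    simp only [borderedShift_succ_castSucc, apply_ite C, map_one, map_zero, ite_mul, one_mul,
      zero_mul, sum_ite_eq, mem_univ, if_true, Fin.val_succ, Fin.val_castSucc,
      Pi.single_eq_of_ne (Fin.succ_ne_zero i)]
    linear_combination hX

theorem charpoly_borderedShift :
    (borderedShift (m + 1) x y).charpoly = companionPoly (m + 1) y -
      ∑ j ∈ Ico 1 (m + 1), C (x j) * divX^[j] (companionPoly (m + 1) y) := by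
  rw [charpoly, det_eq_of_mulVec_eq_single _
      (by simpa using iterate_divX_companionPoly_self (m + 1) y)
      (charmatrix_borderedShift_mulVec x y),
    det_charmatrix_borderedShift_submatrix, mul_right_comm, ← mul_pow, neg_one_mul, neg_neg,
    one_pow, one_mul]

theorem coeff_charpoly_borderedShift (hx : x (m + 1) = 0) {i : ℕ} (hi : 1 ≤ i)
    (him : i ≤ m + 1) :
    (borderedShift (m + 1) x y).charpoly.coeff (m + 1 - i) =
      -x i - y (m + 1 - i) + ∑ j ∈ Ico 1 i, x j * y (m + 1 - i + j) := by
  have hdiag : ∑ j ∈ Ico 1 (m + 1), x j * (if m + 1 - i + j = m + 1 then 1 else 0) = x i := by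
    rw [sum_eq_single i (fun j _ hj => by rw [if_neg (by omega), mul_zero]) (fun hi' => ?_),
      if_pos (by omega), mul_one]
    rw [mem_Ico] at hi'
    rw [show i = m + 1 by omega, hx, zero_mul]
  have hbelow : ∑ j ∈ Ico 1 (m + 1),
      x j * (if m + 1 - i + j < m + 1 then y (m + 1 - i + j) else 0) =
        ∑ j ∈ Ico 1 i, x j * y (m + 1 - i + j) := by
    simp only [mul_ite, mul_zero]
    rw [← sum_filter]
    congr 1
    ext j
    simp only [mem_filter, mem_Ico]
    omega
  rw [charpoly_borderedShift, coeff_sub, finsetSum_coeff]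
  simp only [coeff_C_mul, coeff_iterate_divX, coeff_companionPoly, mul_sub, sum_sub_distrib,
    hdiag, hbelow, if_neg (show m + 1 - i ≠ m + 1 by omega),
    if_pos (show m + 1 - i < m + 1 by omega)]
  ring

end BorderedShift

theorem stmt2_general (n : ℕ) (x y : ℕ → ℂ) (hxn : x n = 0)
    (Y : Matrix (Fin n) (Fin n) ℂ)
    (hY : ∀ i j : Fin n, Y i j =
      if (j : ℕ) = n - 1 then y i
      else if (i : ℕ) = 0 then x ((j : ℕ) + 1)
      else if (i : ℕ) = (j : ℕ) + 1 then 1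
      else 0) :
    ∀ i : ℕ, 1 ≤ i → i ≤ n →
      (Matrix.charpoly Y).coeff (n - i) =
        -x i - y (n - i) + ∑ j ∈ Finset.Ico 1 i, x j * y (n - i + j) := by
  intro i hi hin
  obtain ⟨m, rfl⟩ : ∃ m, n = m + 1 := ⟨n - 1, by omega⟩
  obtain rfl : Y = borderedShift (m + 1) x y := Matrix.ext hY
  exact coeff_charpoly_borderedShift x y hxn hi hin

/-- Characteristic polynomial coefficients of the matrix `Ỹ`
whose first row is `(x₁,…,x_{n−1}, y₀)`, last column `(y₀,…,y_{n−1})`,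
subdiagonal entries `1` and all other entries `0`:
for `1 ≤ i ≤ n`, `a_{n−i} = −x_i − y_{n−i} + ∑_{j=1}^{i−1} x_j y_{n−i+j}`,
where `x_n := 0`.  (Indices of `x`, `y` as in the paper, `x` one-based on the
first row, `y` zero-based on the last column.) -/
theorem stmt2 (n : ℕ) (hn : 0 < n) (x y : ℕ → ℂ) (hxn : x n = 0)
    (Y : Matrix (Fin n) (Fin n) ℂ)
    (hY : ∀ i j : Fin n, Y i j =
      if (j : ℕ) = n - 1 then y i
      else if (i : ℕ) = 0 then x ((j : ℕ) + 1)
      else if (i : ℕ) = (j : ℕ) + 1 then 1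
      else 0) :
    ∀ i : ℕ, 1 ≤ i → i ≤ n →
      (Matrix.charpoly Y).coeff (n - i) =
        -x i - y (n - i) + ∑ j ∈ Finset.Ico 1 i, x j * y (n - i + j) :=
  stmt2_general n x y hxn Y hY
end

section
/- Let ρ : G → GL(V) be a representation of a group G on a finite-dimensional complex vector space V, with m ∈ G such that ρ(m) is diagonalizable with eigenvalue μ₀ ≠ 1 of multiplicity 1 (eigenvector e₁) and eigenvalue 1 of multiplicity dim V − 1. Suppose V' ⊂ V is a proper nonzero invariant subspace not containing e₁. Then the quotient representation on V/V' again has the property that the image of m is diagonalizable with eigenvalue μ₀ of multiplicity 1 and eigenvalue 1 of multiplicity dim(V/V') − 1. -/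
open Module Submodule

namespace Module.End

variable {K V : Type*} [Field K] [AddCommGroup V] [Module K V]

theorem notMem_eigenspace_of_mem_eigenspace {f : End K V} {μ ν : K} (hμν : μ ≠ ν) {v : V}
    (hv : v ∈ f.eigenspace μ) (hv0 : v ≠ 0) : v ∉ f.eigenspace ν := fun hv' =>
  hv0 <| (Submodule.disjoint_def.mp (f.disjoint_genEigenspace hμν 1 1)) v hv hv'

theorem map_mkQ_eigenspace_le_eigenspace_mapQ (f : End K V) (p : Submodule K V)
    (hp : p ≤ p.comap f) (μ : K) :
    (f.eigenspace μ).map p.mkQ ≤ eigenspace (p.mapQ p f hp) μ := by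
  rintro _ ⟨v, hv, rfl⟩
  rw [SetLike.mem_coe, mem_eigenspace_iff] at hv
  rw [mem_eigenspace_iff, mkQ_apply, mapQ_apply, hv, Quotient.mk_smul]

theorem span_singleton_sup_eigenspace_mapQ_eq_top {f : End K V} {p : Submodule K V}
    (hp : p ≤ p.comap f) {v : V} {μ : K} (h : K ∙ v ⊔ f.eigenspace μ = ⊤) :
    K ∙ p.mkQ v ⊔ eigenspace (p.mapQ p f hp) μ = ⊤ := by
  refine eq_top_iff.mpr ?_
  calc ⊤ = (K ∙ v ⊔ f.eigenspace μ).map p.mkQ := by rw [h, Submodule.map_top, range_mkQ]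
    _ = K ∙ p.mkQ v ⊔ (f.eigenspace μ).map p.mkQ := by
      rw [Submodule.map_sup, map_span, Set.image_singleton]
    _ ≤ K ∙ p.mkQ v ⊔ eigenspace (p.mapQ p f hp) μ :=
      sup_le_sup_left (map_mkQ_eigenspace_le_eigenspace_mapQ f p hp μ) _

end Module.End

theorem Submodule.finrank_eq_sub_one_of_span_singleton_sup_eq_top {K V : Type*} [Field K]
    [AddCommGroup V] [Module K V] [FiniteDimensional K V] {v : V} {W : Submodule K V}
    (hv : v ∉ W) (h : K ∙ v ⊔ W = ⊤) : finrank K W = finrank K V - 1 := by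
  have hv0 : v ≠ 0 := fun hv0 => hv (hv0 ▸ W.zero_mem)
  have hcompl : IsCompl (K ∙ v) W :=
    ⟨((disjoint_span_singleton' hv0).mpr hv).symm, codisjoint_iff.mpr h⟩
  have := finrank_add_eq_of_isCompl hcompl
  rw [finrank_span_singleton hv0] at this
  omega

theorem stmt3_general {G : Type*} [Group G] {V : Type*} [AddCommGroup V] [Module ℂ V]
    [FiniteDimensional ℂ V]
    (ρ : Representation ℂ G V) (m : G) (μ₀ : ℂ) (hμ₀ : μ₀ ≠ 1)
    (e₁ : V)
    (heig : ρ m e₁ = μ₀ • e₁)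
    (hdiag : span ℂ {e₁} ⊔ Module.End.eigenspace (ρ m) 1 = ⊤)
    (V' : Submodule ℂ V)
    (hinv : ∀ g : G, V' ≤ V'.comap (ρ g))
    (he₁V' : e₁ ∉ V') :
    Submodule.Quotient.mk (p := V') e₁ ≠ 0 ∧
    (V'.mapQ V' (ρ m) (hinv m)) (Submodule.Quotient.mk e₁) =
      μ₀ • (Submodule.Quotient.mk (p := V') e₁) ∧
    span ℂ {Submodule.Quotient.mk (p := V') e₁} ⊔
        Module.End.eigenspace (V'.mapQ V' (ρ m) (hinv m)) 1 = ⊤ ∧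
    finrank ℂ (Module.End.eigenspace (V'.mapQ V' (ρ m) (hinv m)) 1) =
      finrank ℂ (V ⧸ V') - 1 := by
  have hne : Submodule.Quotient.mk (p := V') e₁ ≠ 0 := by
    rwa [Ne, Quotient.mk_eq_zero]
  have hvec : V'.mapQ V' (ρ m) (hinv m) (Submodule.Quotient.mk e₁) =
      μ₀ • Submodule.Quotient.mk (p := V') e₁ := by
    rw [mapQ_apply, heig, Quotient.mk_smul]
  have hsup := Module.End.span_singleton_sup_eigenspace_mapQ_eq_top (hinv m) hdiag
  refine ⟨hne, hvec, hsup, finrank_eq_sub_one_of_span_singleton_sup_eq_top ?_ hsup⟩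
  exact Module.End.notMem_eigenspace_of_mem_eigenspace hμ₀
    (Module.End.mem_eigenspace_iff.mpr hvec) hne

/-- If `ρ(m)` is diagonalizable with eigenvalue `μ₀ ≠ 1` of
multiplicity 1 (eigenvector `e₁`) and eigenvalue `1` of multiplicity
`dim V − 1`, and `V'` is a proper nonzero invariant subspace not containing
`e₁`, then the induced map on `V ⧸ V'` is again diagonalizable with eigenvalue
`μ₀` of multiplicity 1 (eigenvector the image of `e₁`) and eigenvalue `1` of
multiplicity `dim (V ⧸ V') − 1`. -/
theorem stmt3 {G : Type*} [Group G] {V : Type*} [AddCommGroup V] [Module ℂ V]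
    [FiniteDimensional ℂ V]
    (ρ : Representation ℂ G V) (m : G) (μ₀ : ℂ) (hμ₀ : μ₀ ≠ 1)
    (e₁ : V) (he₁ : e₁ ≠ 0)
    (heig : ρ m e₁ = μ₀ • e₁)
    (hdiag : span ℂ {e₁} ⊔ Module.End.eigenspace (ρ m) 1 = ⊤)
    (hmult : finrank ℂ (Module.End.eigenspace (ρ m) 1) = finrank ℂ V - 1)
    (V' : Submodule ℂ V)
    (hinv : ∀ g : G, V' ≤ V'.comap (ρ g))
    (hV'bot : V' ≠ ⊥) (hV'top : V' ≠ ⊤) (he₁V' : e₁ ∉ V') :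
    Submodule.Quotient.mk (p := V') e₁ ≠ 0 ∧
    (V'.mapQ V' (ρ m) (hinv m)) (Submodule.Quotient.mk e₁) =
      μ₀ • (Submodule.Quotient.mk (p := V') e₁) ∧
    span ℂ {Submodule.Quotient.mk (p := V') e₁} ⊔
        Module.End.eigenspace (V'.mapQ V' (ρ m) (hinv m)) 1 = ⊤ ∧
    finrank ℂ (Module.End.eigenspace (V'.mapQ V' (ρ m) (hinv m)) 1) =
      finrank ℂ (V ⧸ V') - 1 :=
  stmt3_general ρ m μ₀ hμ₀ e₁ heig hdiag V' hinv he₁V'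
end

section
/- Let μ₀ ∈ ℂ* and let 1 ≤ n < p < q with p, q coprime. Then there exist n pairwise distinct complex numbers ζ_1, ..., ζ_n, each a q-th root of some fixed n-th root z of μ₀^{pq}, whose product ζ_1 ⋯ ζ_n equals μ₀^p. -/
/-!
Take `ζᵢ = A ωⁱ` for `0 ≤ i < n`, where `ω` is a primitive `q`-th root of unity and `A` is an
`n`-th root of `μ₀ᵖ / ω^(0 + 1 + ⋯ + (n - 1))`. These are distinct because `n ≤ q`, they share
the `q`-th power `z = A^q`, and their product is `μ₀ᵖ`; then `zⁿ = (∏ ζᵢ)^q = μ₀^(pq)`.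
-/

open Finset

namespace IsPrimitiveRoot

theorem mul_pow_pow_eq {M : Type*} [CommMonoid M] {ω : M} {q : ℕ} (hω : IsPrimitiveRoot ω q)
    (A : M) (i : ℕ) : (A * ω ^ i) ^ q = A ^ q := by
  rw [mul_pow, ← pow_mul, mul_comm i q, pow_mul, hω.pow_eq_one, one_pow, mul_one]

theorem injective_mul_pow {K : Type*} [CommRing K] [IsDomain K] {ω : K} {q : ℕ}
    (hω : IsPrimitiveRoot ω q) {A : K} (hA : A ≠ 0) {n : ℕ} (hnq : n ≤ q) :
    Function.Injective fun i : Fin n => A * ω ^ (i : ℕ) := fun i j hij =>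
  Fin.ext <| hω.pow_inj (i.2.trans_le hnq) (j.2.trans_le hnq) (mul_left_cancel₀ hA hij)

end IsPrimitiveRoot

theorem IsAlgClosed.exists_injective_fin_pow_eq_prod_eq {K : Type*} [Field K] [IsAlgClosed K]
    {ω : K} {n q : ℕ} (hω : IsPrimitiveRoot ω q) (hn : 0 < n) (hnq : n ≤ q) {c : K}
    (hc : c ≠ 0) :
    ∃ z : K, ∃ ζ : Fin n → K, Function.Injective ζ ∧ (∀ i, ζ i ^ q = z) ∧ ∏ i, ζ i = c := by
  have hω0 : ω ≠ 0 := hω.ne_zero (by omega)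
  obtain ⟨A, hA⟩ := IsAlgClosed.exists_pow_nat_eq (c / ω ^ ∑ i : Fin n, (i : ℕ)) hn
  have hA0 : A ≠ 0 := by
    rintro rfl
    rw [zero_pow hn.ne'] at hA
    exact div_ne_zero hc (pow_ne_zero _ hω0) hA.symm
  refine ⟨A ^ q, fun i => A * ω ^ (i : ℕ), hω.injective_mul_pow hA0 hnq,
    fun i => hω.mul_pow_pow_eq A i, ?_⟩
  rw [prod_mul_distrib, prod_const, card_univ, Fintype.card_fin, prod_pow_eq_pow_sum, hA,
    div_mul_cancel₀ c (pow_ne_zero _ hω0)]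

theorem stmt6_general (μ₀ : ℂ) (hμ₀ : μ₀ ≠ 0) (n p q : ℕ)
    (hn : 1 ≤ n) (hnp : n < p) (hpq : p < q) :
    ∃ z : ℂ, z ^ n = μ₀ ^ (p * q) ∧
      ∃ ζ : Fin n → ℂ, Function.Injective ζ ∧
        (∀ i, ζ i ^ q = z) ∧ ∏ i, ζ i = μ₀ ^ p := by
  obtain ⟨z, ζ, hinj, hroot, hprod⟩ :=
    IsAlgClosed.exists_injective_fin_pow_eq_prod_eq (Complex.isPrimitiveRoot_exp q (by omega))
      hn (by omega) (pow_ne_zero p hμ₀)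
  refine ⟨z, ?_, ζ, hinj, hroot, hprod⟩
  calc z ^ n = ∏ i, ζ i ^ q := by simp only [hroot, prod_const, card_univ, Fintype.card_fin]
    _ = μ₀ ^ (p * q) := by rw [prod_pow, hprod, pow_mul]

/-- For `μ₀ ∈ ℂ*` and `1 ≤ n < p < q` with `p, q` coprime, there
is an `n`-th root `z` of `μ₀^{pq}` and pairwise distinct `q`-th roots
`ζ₁, …, ζₙ` of `z` whose product is `μ₀ᵖ`. -/
theorem stmt6 (μ₀ : ℂ) (hμ₀ : μ₀ ≠ 0) (n p q : ℕ)
    (hn : 1 ≤ n) (hnp : n < p) (hpq : p < q) (hcop : Nat.Coprime p q) :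
    ∃ z : ℂ, z ^ n = μ₀ ^ (p * q) ∧
      ∃ ζ : Fin n → ℂ, Function.Injective ζ ∧
        (∀ i, ζ i ^ q = z) ∧ ∏ i, ζ i = μ₀ ^ p :=
  stmt6_general μ₀ hμ₀ n p q hn hnp hpq
end

section
/- Suppose ε is a ℂ-valued map on group elements of a group G (with distinguished elements m, central values μ ∈ ℂ*) satisfying ε([g h]) − ε([g m h]) = ε([g])ε([h]) and ε([m^{±1} g]) = μ^{±1} ε([g]) = ε([g m^{±1}]) for all g, h ∈ G, and ε([e]) = 1 − μ. If b = w m w^{-1} for some w ∈ G, then ε([b]) + μ ε([b^{-1}]) = ε([e]) + ε([m]), i.e. ε([b^{-1}]) = μ^{-1}((1−μ) + μ(1−μ) − ε([b])). -/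
/-!
The product relation applied to `(w, w⁻¹)` and to `(w, m⁻¹ w⁻¹)` ties both `ε(w m w⁻¹)` and
`ε(w m⁻¹ w⁻¹)` to `ε(1)`. Since `ε(w⁻¹) = μ ε(m⁻¹ w⁻¹)`, the error term is `ε(w) ε(w⁻¹)` in
both cases, up to a factor `μ`, and eliminating it gives the identity.
-/

section ConjugateOfMeridian

variable {G R : Type*} [Group G] [CommRing R] {m : G} {μ : R} {ε : G → R}

theorem apply_mul_apply_inv_eq_one_sub_apply_conj
    (hprod : ∀ g h : G, ε (g * h) - ε (g * m * h) = ε g * ε h) (w : G) :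
    ε w * ε w⁻¹ = ε 1 - ε (w * m * w⁻¹) := by
  simpa only [mul_inv_cancel] using (hprod w w⁻¹).symm

theorem apply_mul_apply_inv_eq_mul_apply_conj_inv_sub
    (hm : ∀ g : G, ε (m * g) = μ * ε g)
    (hprod : ∀ g h : G, ε (g * h) - ε (g * m * h) = ε g * ε h) (w : G) :
    ε w * ε w⁻¹ = μ * (ε (w * m⁻¹ * w⁻¹) - ε 1) := by
  have hshift : ε w⁻¹ = μ * ε (m⁻¹ * w⁻¹) := by
    simpa only [mul_inv_cancel_left] using hm (m⁻¹ * w⁻¹)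
  have hcancel : w * m * (m⁻¹ * w⁻¹) = 1 := by group
  have h := hprod w (m⁻¹ * w⁻¹)
  rw [hcancel, ← mul_assoc] at h
  rw [hshift, h]
  ring

theorem apply_conj_add_mul_apply_conj_inv
    (hm : ∀ g : G, ε (m * g) = μ * ε g)
    (hprod : ∀ g h : G, ε (g * h) - ε (g * m * h) = ε g * ε h) (w : G) :
    ε (w * m * w⁻¹) + μ * ε (w * m⁻¹ * w⁻¹) = ε 1 + μ * ε 1 := by
  linear_combination apply_mul_apply_inv_eq_one_sub_apply_conj hprod w -
    apply_mul_apply_inv_eq_mul_apply_conj_inv_sub hm hprod w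

end ConjugateOfMeridian

theorem stmt9_general {G : Type*} [Group G] (m : G) (μ : ℂ)
    (ε : G → ℂ)
    (hm : ∀ g : G, ε (m * g) = μ * ε g ∧ ε (g * m) = μ * ε g)
    (hprod : ∀ g h : G, ε (g * h) - ε (g * m * h) = ε g * ε h)
    (b w : G) (hb : b = w * m * w⁻¹) :
    ε b + μ * ε b⁻¹ = ε 1 + ε m := by
  have hm_left : ∀ g : G, ε (m * g) = μ * ε g := fun g => (hm g).1
  have hb_inv : b⁻¹ = w * m⁻¹ * w⁻¹ := by rw [hb]; group
  have hm_one : ε m = μ * ε 1 := by simpa only [mul_one] using hm_left 1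
  rw [hb_inv, hb, hm_one]
  exact apply_conj_add_mul_apply_conj_inv hm_left hprod w

/-- If `ε : G → ℂ` satisfies the cord-algebra relations
`ε(e) = 1 − μ`, `ε(m^{±1}g) = μ^{±1}ε(g) = ε(gm^{±1})`, and
`ε(gh) − ε(gmh) = ε(g)ε(h)`, and `b = w m w⁻¹`, then
`ε(b) + μ ε(b⁻¹) = ε(e) + ε(m)`. -/
theorem stmt9 {G : Type*} [Group G] (m : G) (μ : ℂ) (hμ0 : μ ≠ 0) (hμ1 : μ ≠ 1)
    (ε : G → ℂ)
    (he : ε 1 = 1 - μ)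
    (hm : ∀ g : G, ε (m * g) = μ * ε g ∧ ε (g * m) = μ * ε g)
    (hminv : ∀ g : G, ε (m⁻¹ * g) = μ⁻¹ * ε g ∧ ε (g * m⁻¹) = μ⁻¹ * ε g)
    (hprod : ∀ g h : G, ε (g * h) - ε (g * m * h) = ε g * ε h)
    (b w : G) (hb : b = w * m * w⁻¹) :
    ε b + μ * ε b⁻¹ = ε 1 + ε m :=
  stmt9_general m μ ε hm hprod b w hb
end

section
/- Let μ ∈ ℂ* with μ ≠ 1 and u ∈ ℂ. Let N = [[μ, 1],[0, 1]] and C = [[μ, 0],[−μu, 1]]. If W is any product of matrices N^{±1} and C^{±1} that is a palindrome (the sequence of exponents reads the same forwards and backwards with N's and C's alternating symmetrically), then −μu·W_{12} = W_{21}. -/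
open Matrix

private lemma prod_comm_aux {J : Matrix (Fin 2) (Fin 2) ℂ} :
    ∀ {l l' : List (Matrix (Fin 2) (Fin 2) ℂ)},
      List.Forall₂ (fun a b => J * a = b * J) l l' → J * l.prod = l'.prod * J := by
  intro l l' h
  induction h with
  | nil => simp
  | cons h _ ih =>
    simp only [List.prod_cons]
    rw [← mul_assoc, h, mul_assoc, ih, ← mul_assoc]

/-- Let `N = [[μ,1],[0,1]]` and `C = [[μ,0],[−μu,1]]`
(`μ ≠ 0, 1`), with inverses `N⁻¹, C⁻¹`.  If
`W = N^{ε₁} C^{ε₂} ⋯ N^{ε_{r−1}} C^{ε_r}` with `εᵢ ∈ {±1}` is a palindrome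
(`εᵢ = ε_{r+1−i}` for all `i`), then `−μu·W₁₂ = W₂₁`. -/
theorem stmt11 (μ u : ℂ) (hμ0 : μ ≠ 0) (hμ1 : μ ≠ 1)
    (N C Ninv Cinv : Matrix (Fin 2) (Fin 2) ℂ)
    (hN : N = !![μ, 1; 0, 1]) (hC : C = !![μ, 0; -μ * u, 1])
    (hNinv : N * Ninv = 1) (hCinv : C * Cinv = 1)
    (r : ℕ) (hr : Even r) (ε : Fin r → ℤ)
    (hε : ∀ i, ε i = 1 ∨ ε i = -1)
    (hpal : ∀ i : Fin r, ε i = ε i.rev)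
    (W : Matrix (Fin 2) (Fin 2) ℂ)
    (hW : W = (List.ofFn fun i : Fin r =>
      if Even (i : ℕ) then (if ε i = 1 then N else Ninv)
      else (if ε i = 1 then C else Cinv)).prod) :
    -μ * u * W 0 1 = W 1 0 := by
  set f : Fin r → Matrix (Fin 2) (Fin 2) ℂ := fun i : Fin r =>
      if Even (i : ℕ) then (if ε i = 1 then N else Ninv)
      else (if ε i = 1 then C else Cinv) with hf
  set J : Matrix (Fin 2) (Fin 2) ℂ := !![1, 0; 0, -μ * u] with hJ
  have hNinv' : Ninv * N = 1 := mul_eq_one_comm.mp hNinv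
  have hCinv' : Cinv * C = 1 := mul_eq_one_comm.mp hCinv
  -- key entrywise identities
  have h1 : J * Cᵀ = N * J := by
    rw [hJ, hN, hC]
    ext i j
    fin_cases i <;> fin_cases j <;>
      simp [Matrix.mul_apply, Fin.sum_univ_succ, Matrix.transpose, Matrix.vecHead, Matrix.vecTail] <;> ring
  have h2 : J * Nᵀ = C * J := by
    rw [hJ, hN, hC]
    ext i j
    fin_cases i <;> fin_cases j <;>
      simp [Matrix.mul_apply, Fin.sum_univ_succ, Matrix.transpose, Matrix.vecHead, Matrix.vecTail] <;> ring
  have hCt : Cᵀ * Cinvᵀ = 1 := by rw [← Matrix.transpose_mul, hCinv', Matrix.transpose_one]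
  have hNt : Nᵀ * Ninvᵀ = 1 := by rw [← Matrix.transpose_mul, hNinv', Matrix.transpose_one]
  have h3 : J * Cinvᵀ = Ninv * J := by
    have e : N * (J * Cinvᵀ) = J := by
      rw [← mul_assoc, h1.symm, mul_assoc, hCt, mul_one]
    calc J * Cinvᵀ = (Ninv * N) * (J * Cinvᵀ) := by rw [hNinv', one_mul]
      _ = Ninv * (N * (J * Cinvᵀ)) := by rw [mul_assoc]
      _ = Ninv * J := by rw [e]
  have h4 : J * Ninvᵀ = Cinv * J := by
    have e : C * (J * Ninvᵀ) = J := by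
      rw [← mul_assoc, h2.symm, mul_assoc, hNt, mul_one]
    calc J * Ninvᵀ = (Cinv * C) * (J * Ninvᵀ) := by rw [hCinv', one_mul]
      _ = Cinv * (C * (J * Ninvᵀ)) := by rw [mul_assoc]
      _ = Cinv * J := by rw [e]
  -- the main commutation J * Wᵀ = W * J
  have key : J * Wᵀ = W * J := by
    rw [hW, Matrix.transpose_list_prod]
    apply prod_comm_aux
    rw [List.forall₂_iff_get]
    constructor
    · simp
    · intro i h₁ h₂
      simp only [List.length_ofFn, List.length_reverse, List.length_map] at h₁ h₂
      have hgl : ((List.map transpose (List.ofFn f)).reverse.get ⟨i, by simpa using h₁⟩)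
          = (f ⟨r - 1 - i, by omega⟩)ᵀ := by
        rw [List.get_eq_getElem, List.getElem_reverse]
        simp only [List.length_map, List.length_ofFn]
        rw [List.getElem_map, List.getElem_ofFn]
      have hgr : ((List.ofFn f).get ⟨i, by simpa using h₂⟩) = f ⟨i, h₂⟩ := by
        rw [List.get_eq_getElem, List.getElem_ofFn]
      rw [hgl, hgr]
      -- palindrome: exponents match
      have hrev : (⟨i, h₂⟩ : Fin r).rev = ⟨r - 1 - i, by omega⟩ := by
        ext; simp [Fin.rev]; omega
      have hpe : ε ⟨r - 1 - i, by omega⟩ = ε ⟨i, h₂⟩ := by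
        rw [← hrev, ← hpal]
      -- parity flips
      have hr2 : r % 2 = 0 := Nat.even_iff.mp hr
      have hpar : Even (r - 1 - i) ↔ ¬ Even (i : ℕ) := by
        rw [Nat.even_iff, Nat.even_iff]; omega
      simp only [hf, hpe]
      by_cases hi : Even i
      · rw [if_pos hi, if_neg (by rw [hpar]; exact fun h => h hi)]
        by_cases he : ε ⟨i, h₂⟩ = 1
        · rw [if_pos he, if_pos he]; exact h1
        · rw [if_neg he, if_neg he]; exact h3
      · rw [if_neg hi, if_pos (hpar.mpr hi)]
        by_cases he : ε ⟨i, h₂⟩ = 1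
        · rw [if_pos he, if_pos he]; exact h2
        · rw [if_neg he, if_neg he]; exact h4
  -- read off the (1,0) entry
  have := congrFun (congrFun key 1) 0
  simp [Matrix.mul_apply, Fin.sum_univ_succ, hJ, Matrix.transpose_apply] at this
  linear_combination this
end

section
/- Let a, b, μ ∈ ℂ with a² − b = μ², b ≠ 0, and let A, B ∈ ℂ satisfy μA + (a − √b)B = 0. For j ≥ 0 define A_j = (a−√b)^{−j−1}(μ^{2j+1} − (a−√b)^{2j+1})A + (a+√b)^{−j−1}(μ^{2j+1} − (a+√b)^{2j+1})B. If A_0 = 0 then A_j = 0 for all j ≥ 0. -/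
/-!
Write `p = a - √b`, `q = a + √b`, so that `μ² = p q`. Clearing denominators in `A₀ = 0` and
substituting `p B = -μ A` leaves `2 q (μ - p) A = 0`. Hence either `A = 0`, and then `B = 0`, or
`μ = p`, and then `p² = p q` forces `q = p = μ`; in both cases every `A_j` vanishes.
-/

section

variable {K : Type*} [Field K]

def coeffTerm (p q μ A B : K) (j : ℕ) : K :=
  p ^ (-(j : ℤ) - 1) * (μ ^ (2 * j + 1) - p ^ (2 * j + 1)) * A +
    q ^ (-(j : ℤ) - 1) * (μ ^ (2 * j + 1) - q ^ (2 * j + 1)) * B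

theorem coeffTerm_zero (p q μ A B : K) :
    coeffTerm p q μ A B 0 = p⁻¹ * (μ - p) * A + q⁻¹ * (μ - q) * B := by
  simp [coeffTerm]

variable [NeZero (2 : K)] {p q μ A B : K}

theorem mul_sub_eq_zero_of_coeffTerm_zero (hpq : μ ^ 2 = p * q) (hp : p ≠ 0) (hq : q ≠ 0)
    (hAB : μ * A + p * B = 0) (h0 : coeffTerm p q μ A B 0 = 0) : A * (μ - p) = 0 := by
  rw [coeffTerm_zero] at h0
  field_simp at h0
  have h2q : (2 * q) * (A * (μ - p)) = 0 := by
    linear_combination h0 - (μ - q) * hAB + A * hpq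
  exact (mul_eq_zero.1 h2q).resolve_left (mul_ne_zero two_ne_zero hq)

theorem coeffTerm_eq_zero (hpq : μ ^ 2 = p * q) (hp : p ≠ 0) (hq : q ≠ 0)
    (hAB : μ * A + p * B = 0) (h0 : coeffTerm p q μ A B 0 = 0) (j : ℕ) :
    coeffTerm p q μ A B j = 0 := by
  rcases mul_eq_zero.1 (mul_sub_eq_zero_of_coeffTerm_zero hpq hp hq hAB h0) with hA | hμp
  · have hB : B = 0 := by
      simpa [hA, hp] using hAB
    simp [coeffTerm, hA, hB]
  · have hμ : μ = p := sub_eq_zero.1 hμp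
    have hqp : q = p := mul_left_cancel₀ hp (by rw [← hpq, hμ, sq])
    simp [coeffTerm, hμ, hqp]

end

theorem stmt16_general (a b μ sb A B : ℂ)
    (hsb : sb ^ 2 = b)
    (hab : a ^ 2 - b = μ ^ 2)
    (hm : a - sb ≠ 0) (hp : a + sb ≠ 0)
    (hAB : μ * A + (a - sb) * B = 0)
    (h0 : (a - sb) ^ (-(0 : ℤ) - 1) * (μ ^ (2 * 0 + 1) - (a - sb) ^ (2 * 0 + 1)) * A +
      (a + sb) ^ (-(0 : ℤ) - 1) * (μ ^ (2 * 0 + 1) - (a + sb) ^ (2 * 0 + 1)) * B = 0) :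
    ∀ j : ℕ,
      (a - sb) ^ (-(j : ℤ) - 1) * (μ ^ (2 * j + 1) - (a - sb) ^ (2 * j + 1)) * A +
        (a + sb) ^ (-(j : ℤ) - 1) * (μ ^ (2 * j + 1) - (a + sb) ^ (2 * j + 1)) * B = 0 := by
  have hpq : μ ^ 2 = (a - sb) * (a + sb) := by
    rw [← hab, ← hsb]
    ring
  exact coeffTerm_eq_zero hpq hm hp hAB h0

/-- Let `a² − b = μ²`, `b ≠ 0` (with fixed square root `sb` of
`b`, `a ± sb ≠ 0`), and `μA + (a − sb)B = 0`.  Define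
`A_j = (a−sb)^{−j−1}(μ^{2j+1} − (a−sb)^{2j+1})A + (a+sb)^{−j−1}(μ^{2j+1} − (a+sb)^{2j+1})B`.
If `A₀ = 0` then `A_j = 0` for all `j ≥ 0`. -/
theorem stmt16 (a b μ sb A B : ℂ)
    (hsb : sb ^ 2 = b) (hb : b ≠ 0)
    (hab : a ^ 2 - b = μ ^ 2)
    (hm : a - sb ≠ 0) (hp : a + sb ≠ 0)
    (hAB : μ * A + (a - sb) * B = 0)
    (h0 : (a - sb) ^ (-(0 : ℤ) - 1) * (μ ^ (2 * 0 + 1) - (a - sb) ^ (2 * 0 + 1)) * A +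
      (a + sb) ^ (-(0 : ℤ) - 1) * (μ ^ (2 * 0 + 1) - (a + sb) ^ (2 * 0 + 1)) * B = 0) :
    ∀ j : ℕ,
      (a - sb) ^ (-(j : ℤ) - 1) * (μ ^ (2 * j + 1) - (a - sb) ^ (2 * j + 1)) * A +
        (a + sb) ^ (-(j : ℤ) - 1) * (μ ^ (2 * j + 1) - (a + sb) ^ (2 * j + 1)) * B = 0 :=
  stmt16_general a b μ sb A B hsb hab hm hp hAB h0
end

section
/- Let μ ≠ 1 be a nonzero complex number, let π be a group with elements m, w, and suppose ε is a function on π to ℂ satisfying the cord-algebra relations: ε(e) = 1−μ, ε(m^{±1}g) = μ^{±1}ε(g) = ε(gm^{±1}), and ε(g₁g₂) − ε(g₁mg₂) = ε(g₁)ε(g₂) for all g, g₁, g₂ ∈ π. If additionally w satisfies w^k(mwm^{-1}w^{-1}m^{-1}) = (m^{-1}w^{-1}mwmw^{-1})w^k in π, then ε(w^k) = μ^{-2}ε(w^{-1})²ε(w^{k+1}) − 2μ^{-1}ε(w^k)ε(w^{-1})(1 + μ^{-1}ε(w)ε(w^{-1})) + ε(w^{k−1})(1 + μ^{-1}ε(w)ε(w^{-1}))².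 -/
/-!
Evaluate `ε` on both sides of `wᵏ E = F wᵏ` and of `wᵏ E w = F wᵏ⁺¹`, cutting each word at one
letter `m^{±1}` with the skein relations `ε(g₁ m g₂) = ε(g₁ g₂) - ε(g₁) ε(g₂)` and
`ε(g₁ m⁻¹ g₂) = ε(g₁ g₂) + μ⁻¹ ε(g₁) ε(g₂)`, until only powers of `w` remain (the second word
also produces `ε(1) = 1 - μ`). This gives two linear relations among `ε(w^{k-1})`, `ε(wᵏ)`,
`ε(w^{k+1})`; the identity is `(1 + μ⁻¹ ε(w) ε(w⁻¹))` times the first minus `μ⁻¹ ε(w⁻¹)` times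
the second.
-/

namespace CordAlgebra

variable {K π : Type*} [Field K] [Group π] {μ : K} {m w : π} {ε : π → K}

theorem eps_mul_m_mul (hprod : ∀ g₁ g₂ : π, ε (g₁ * g₂) - ε (g₁ * m * g₂) = ε g₁ * ε g₂)
    (g₁ g₂ : π) : ε (g₁ * m * g₂) = ε (g₁ * g₂) - ε g₁ * ε g₂ := by
  linear_combination -hprod g₁ g₂

theorem eps_mul_m_inv_mul (hminv : ∀ g : π, ε (g * m⁻¹) = μ⁻¹ * ε g)
    (hprod : ∀ g₁ g₂ : π, ε (g₁ * g₂) - ε (g₁ * m * g₂) = ε g₁ * ε g₂) (g₁ g₂ : π) :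
    ε (g₁ * m⁻¹ * g₂) = ε (g₁ * g₂) + μ⁻¹ * ε g₁ * ε g₂ := by
  have h := hprod (g₁ * m⁻¹) g₂
  rw [inv_mul_cancel_right, hminv] at h
  linear_combination h

theorem eps_mul_E_mul (hminv : ∀ g : π, ε (g * m⁻¹) = μ⁻¹ * ε g)
    (hprod : ∀ g₁ g₂ : π, ε (g₁ * g₂) - ε (g₁ * m * g₂) = ε g₁ * ε g₂) (g h : π) :
    ε (g * (m * w * m⁻¹ * w⁻¹ * m⁻¹) * h) =
      ε (g * h) + μ⁻¹ * (ε (g * w) - ε g * ε w) * ε (w⁻¹ * m⁻¹ * h) := by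
  rw [show g * (m * w * m⁻¹ * w⁻¹ * m⁻¹) * h = g * m * w * m⁻¹ * (w⁻¹ * m⁻¹ * h) by group,
    eps_mul_m_inv_mul hminv hprod, show g * m * w * (w⁻¹ * m⁻¹ * h) = g * h by group,
    eps_mul_m_mul hprod]

theorem eps_F_mul (hminv : ∀ g : π, ε (m⁻¹ * g) = μ⁻¹ * ε g)
    (hprod : ∀ g₁ g₂ : π, ε (g₁ * g₂) - ε (g₁ * m * g₂) = ε g₁ * ε g₂) (h : π) :
    ε ((m⁻¹ * w⁻¹ * m * w * m * w⁻¹) * h) =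
      ε (w⁻¹ * h) - μ⁻¹ * ε w⁻¹ * (ε h - ε w * ε (w⁻¹ * h)) := by
  rw [show (m⁻¹ * w⁻¹ * m * w * m * w⁻¹) * h = m⁻¹ * w⁻¹ * m * (w * m * (w⁻¹ * h)) by group,
    eps_mul_m_mul hprod, show m⁻¹ * w⁻¹ * (w * m * (w⁻¹ * h)) = w⁻¹ * h by group,
    eps_mul_m_mul hprod, mul_inv_cancel_left, hminv]

end CordAlgebra

open CordAlgebra

theorem stmt17_general {π : Type*} [Group π] (μ : ℂ)
    (m w : π) (ε : π → ℂ)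
    (he : ε 1 = 1 - μ)
    (hminv : ∀ g : π, ε (m⁻¹ * g) = μ⁻¹ * ε g ∧ ε (g * m⁻¹) = μ⁻¹ * ε g)
    (hprod : ∀ g₁ g₂ : π, ε (g₁ * g₂) - ε (g₁ * m * g₂) = ε g₁ * ε g₂)
    (k : ℤ)
    (hrel : w ^ k * (m * w * m⁻¹ * w⁻¹ * m⁻¹) =
      (m⁻¹ * w⁻¹ * m * w * m * w⁻¹) * w ^ k) :
    ε (w ^ k) =
      μ⁻¹ ^ 2 * ε w⁻¹ ^ 2 * ε (w ^ (k + 1)) -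
        2 * μ⁻¹ * ε (w ^ k) * ε w⁻¹ * (1 + μ⁻¹ * ε w * ε w⁻¹) +
        ε (w ^ (k - 1)) * (1 + μ⁻¹ * ε w * ε w⁻¹) ^ 2 := by
  have hE := eps_mul_E_mul (w := w) (fun g ↦ (hminv g).2) hprod (w ^ k)
  have hF := eps_F_mul (w := w) (fun g ↦ (hminv g).1) hprod
  have hpred : ∀ n : ℤ, w⁻¹ * w ^ n = w ^ (n - 1) := fun n ↦ by group
  have hsucc : w ^ k * w = w ^ (k + 1) := (zpow_add_one w k).symm
  have eq1 : ε (w ^ k) + μ⁻¹ * (ε (w ^ (k + 1)) - ε (w ^ k) * ε w) * (μ⁻¹ * ε w⁻¹) =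
      ε (w ^ (k - 1)) - μ⁻¹ * ε w⁻¹ * (ε (w ^ k) - ε w * ε (w ^ (k - 1))) := by
    have h := hE 1
    simp only [mul_one] at h
    rw [hrel, hF, hpred, hsucc, (hminv _).2] at h
    exact h.symm
  have eq2 : ε (w ^ (k + 1)) + μ⁻¹ * (ε (w ^ (k + 1)) - ε (w ^ k) * ε w) *
        (1 - μ + μ⁻¹ * ε w⁻¹ * ε w) =
      ε (w ^ k) - μ⁻¹ * ε w⁻¹ * (ε (w ^ (k + 1)) - ε w * ε (w ^ k)) := by
    have h := hE w
    rw [hrel, mul_assoc, hsucc, hF, hpred, add_sub_cancel_right,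
      eps_mul_m_inv_mul (fun g ↦ (hminv g).2) hprod, inv_mul_cancel, he] at h
    exact h.symm
  have hμ : μ⁻¹ * μ * μ⁻¹ = μ⁻¹ := by simpa only [inv_inv] using mul_inv_mul_cancel μ⁻¹
  linear_combination (1 + μ⁻¹ * ε w * ε w⁻¹) * eq1 - μ⁻¹ * ε w⁻¹ * eq2 +
    ε w⁻¹ * (ε (w ^ k) * ε w - ε (w ^ (k + 1))) * hμ

/-- Let `ε : π → ℂ` satisfy the cord-algebra relations, and
suppose `wᵏ E = F wᵏ` in `π`, where `E = m w m⁻¹ w⁻¹ m⁻¹` and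
`F = m⁻¹ w⁻¹ m w m w⁻¹`.  Then
`ε(wᵏ) = μ⁻² ε(w⁻¹)² ε(w^{k+1}) − 2μ⁻¹ ε(wᵏ) ε(w⁻¹)(1 + μ⁻¹ ε(w) ε(w⁻¹))
  + ε(w^{k−1})(1 + μ⁻¹ ε(w) ε(w⁻¹))²`. -/
theorem stmt17 {π : Type*} [Group π] (μ : ℂ) (hμ0 : μ ≠ 0) (hμ1 : μ ≠ 1)
    (m w : π) (ε : π → ℂ)
    (he : ε 1 = 1 - μ)
    (hm : ∀ g : π, ε (m * g) = μ * ε g ∧ ε (g * m) = μ * ε g)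
    (hminv : ∀ g : π, ε (m⁻¹ * g) = μ⁻¹ * ε g ∧ ε (g * m⁻¹) = μ⁻¹ * ε g)
    (hprod : ∀ g₁ g₂ : π, ε (g₁ * g₂) - ε (g₁ * m * g₂) = ε g₁ * ε g₂)
    (k : ℤ)
    (hrel : w ^ k * (m * w * m⁻¹ * w⁻¹ * m⁻¹) =
      (m⁻¹ * w⁻¹ * m * w * m * w⁻¹) * w ^ k) :
    ε (w ^ k) =
      μ⁻¹ ^ 2 * ε w⁻¹ ^ 2 * ε (w ^ (k + 1)) -
        2 * μ⁻¹ * ε (w ^ k) * ε w⁻¹ * (1 + μ⁻¹ * ε w * ε w⁻¹) +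
        ε (w ^ (k - 1)) * (1 + μ⁻¹ * ε w * ε w⁻¹) ^ 2 :=
  stmt17_general μ m w ε he hminv hprod k hrel
end
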